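/- Let B : ℝ² × ℝ² → ℝ² be a symmetric bilinear map (B(u,v) = B(v,u)) such that for every u ∈ ℝ² the vector B(u,u) lies in the line ℝ∙u spanned by u. Then there exists a linear functional υ : ℝ² → ℝ such that B(u,v) = υ(u) • v + υ(v) • u for all u, v ∈ ℝ². -/
import Mathlib


noncomputable section

/-- The plane ℝ², as `Fin 2 → ℝ`. -/
abbrev E2 : Type := Fin 2 → ℝ

/-- if a symmetric bilinear map `B : ℝ² × ℝ² → ℝ²` satisfies `B(u,u) ∈ ℝ∙u`
for every `u`, then `B(u,v) = υ(u) • v + υ(v) • u` for some linear functional `υ`. -/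
theorem stmt_1 (B : E2 →ₗ[ℝ] E2 →ₗ[ℝ] E2)
    (hsym : ∀ u v : E2, B u v = B v u)
    (h : ∀ u : E2, B u u ∈ Submodule.span ℝ {u}) :
    ∃ υ : E2 →ₗ[ℝ] ℝ, ∀ u v : E2, B u v = υ u • v + υ v • u := by
  set e0 : E2 := Pi.single 0 1 with he0
  set e1 : E2 := Pi.single 1 1 with he1
  have expand : ∀ x : E2, x = x 0 • e0 + x 1 • e1 := by
    intro x
    funext i
    fin_cases i <;> simp [he0, he1]
  obtain ⟨c0, hc0⟩ := Submodule.mem_span_singleton.mp (h e0)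
  obtain ⟨c1, hc1⟩ := Submodule.mem_span_singleton.mp (h e1)
  obtain ⟨c2, hc2⟩ := Submodule.mem_span_singleton.mp (h (e0 + e1))
  obtain ⟨c3, hc3⟩ := Submodule.mem_span_singleton.mp (h (e0 - e1))
  set p : ℝ := B e0 e1 0 with hp
  set q : ℝ := B e0 e1 1 with hq
  have hB01 : B e0 e1 = p • e0 + q • e1 := expand (B e0 e1)
  have h2 : c2 • (e0 + e1) = c0 • e0 + c1 • e1 + (2:ℝ) • B e0 e1 := by
    rw [hc2]
    simp only [map_add, LinearMap.add_apply]
    rw [← hc0, ← hc1, hsym e1 e0]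
    module
  have h3 : c3 • (e0 - e1) = c0 • e0 + c1 • e1 - (2:ℝ) • B e0 e1 := by
    rw [hc3]
    simp only [map_sub, map_add, LinearMap.sub_apply, LinearMap.add_apply]
    rw [← hc0, ← hc1, hsym e1 e0]
    module
  have h20 := congrFun h2 0
  have h21 := congrFun h2 1
  have h30 := congrFun h3 0
  have h31 := congrFun h3 1
  simp [he0, he1, ← hp, ← hq] at h20 h21 h30 h31
  -- h20 : c2 = c0 + 2p (roughly), etc.
  have hqv : q = c0 / 2 := by linarith
  have hpv : p = c1 / 2 := by linarith
  refine ⟨q • LinearMap.proj 0 + p • LinearMap.proj 1, ?_⟩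
  intro u v
  have hu := expand u
  have hv := expand v
  obtain ⟨s, t, rfl⟩ : ∃ s t : ℝ, u = s • e0 + t • e1 := ⟨u 0, u 1, hu⟩
  obtain ⟨s', t', rfl⟩ : ∃ s t : ℝ, v = s • e0 + t • e1 := ⟨v 0, v 1, hv⟩
  have hB00 : B e0 e0 = (2 * q) • e0 := by rw [← hc0, hqv]; module
  have hB11 : B e1 e1 = (2 * p) • e1 := by rw [← hc1, hpv]; module
  have hB10 : B e1 e0 = p • e0 + q • e1 := by rw [hsym e1 e0]; exact hB01
  simp only [map_add, map_smul, LinearMap.add_apply, LinearMap.smul_apply,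
    hB00, hB11, hB01, hB10, LinearMap.proj_apply, smul_eq_mul]
  have he00 : e0 0 = 1 := by simp [he0]
  have he01 : e0 1 = 0 := by simp [he0]
  have he10 : e1 0 = 0 := by simp [he1]
  have he11 : e1 1 = 1 := by simp [he1]
  simp only [Pi.add_apply, Pi.smul_apply, he00, he01, he10, he11, smul_eq_mul]
  module
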